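/- arXiv:2408.00465 — 3 statements merged into one kernel-verified Lean document; each statement's English description precedes it below -/
import Mathlib

section
/- Let φ(b, d) = max { rᵀy : A y ≤ b, 0 ≤ y ≤ d }, and suppose y* is an optimal solution of φ(b, Z) with y*_j ≥ 1. Then y* − e_j is an optimal solution of φ(b − A_j, Z − e_j), where A_j is the j-th column of A and e_j the j-th unit vector. Consequently, φ(b, Z) − φ(b − A_j, Z − e_j) − r_j = 0. -/
open BigOperators

/-- Value of the parameterized LP `max { rᵀy : A y ≤ b, 0 ≤ y ≤ d }`. -/
noncomputable def lpValue {m n : ℕ} (r : Fin n → ℝ) (A : Matrix (Fin m) (Fin n) ℝ)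
    (b : Fin m → ℝ) (d : Fin n → ℝ) : ℝ :=
  sSup {v : ℝ | ∃ y : Fin n → ℝ,
    (∀ i, ∑ j, A i j * y j ≤ b i) ∧ (∀ j, 0 ≤ y j) ∧ (∀ j, y j ≤ d j) ∧
    v = ∑ j, r j * y j}

/-- `y` is an optimal solution of the LP `max { rᵀy : A y ≤ b, 0 ≤ y ≤ d }`. -/
def IsLPOptimal {m n : ℕ} (r : Fin n → ℝ) (A : Matrix (Fin m) (Fin n) ℝ)
    (b : Fin m → ℝ) (d : Fin n → ℝ) (y : Fin n → ℝ) : Prop :=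
  ((∀ i, ∑ j, A i j * y j ≤ b i) ∧ (∀ j, 0 ≤ y j) ∧ (∀ j, y j ≤ d j)) ∧
  ∀ z : Fin n → ℝ, (∀ i, ∑ j, A i j * z j ≤ b i) → (∀ j, 0 ≤ z j) →
    (∀ j, z j ≤ d j) → ∑ j, r j * z j ≤ ∑ j, r j * y j

lemma lpValue_eq_of_optimal {m n : ℕ} (r : Fin n → ℝ) (A : Matrix (Fin m) (Fin n) ℝ)
    (b : Fin m → ℝ) (d : Fin n → ℝ) (y : Fin n → ℝ)
    (h : IsLPOptimal r A b d y) : lpValue r A b d = ∑ j, r j * y j := by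
  obtain ⟨⟨h1, h2, h3⟩, hmax⟩ := h
  apply le_antisymm
  · refine csSup_le ⟨_, ⟨y, h1, h2, h3, rfl⟩⟩ ?_
    rintro v ⟨z, hz1, hz2, hz3, rfl⟩
    exact hmax z hz1 hz2 hz3
  · apply le_csSup
    · exact ⟨_, fun v ⟨z, hz1, hz2, hz3, hv⟩ => hv ▸ hmax z hz1 hz2 hz3⟩
    · exact ⟨y, h1, h2, h3, rfl⟩

/-- If `y*` is optimal for `φ(b, Z)` with `y*_j ≥ 1`, then `y* − e_j` is optimal for
`φ(b − A_j, Z − e_j)`, and `φ(b, Z) − φ(b − A_j, Z − e_j) − r_j = 0`. -/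
theorem accept_optimality {m n : ℕ} (r : Fin n → ℝ) (A : Matrix (Fin m) (Fin n) ℝ)
    (b : Fin m → ℝ) (Z : Fin n → ℝ) (j : Fin n) (y : Fin n → ℝ)
    (hr : ∀ k, 0 ≤ r k) (hA : ∀ i k, 0 ≤ A i k)
    (hb : ∀ i, A i j ≤ b i) (hZ : ∀ k, 0 ≤ Z k) (hZj : 1 ≤ Z j)
    (hopt : IsLPOptimal r A b Z y) (hyj : 1 ≤ y j) :
    IsLPOptimal r A (fun i => b i - A i j) (Z - Pi.single j 1) (y - Pi.single j 1) ∧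
    lpValue r A b Z - lpValue r A (fun i => b i - A i j) (Z - Pi.single j 1) - r j = 0 := by
  obtain ⟨⟨h1, h2, h3⟩, hmax⟩ := hopt
  set e : Fin n → ℝ := Pi.single j 1 with he
  have hek : ∀ k, e k = if k = j then 1 else 0 := by
    intro k; simp [he, Pi.single_apply]
  have hsingle : ∀ (c : Fin n → ℝ), ∑ k, c k * e k = c j := by
    intro c
    rw [Finset.sum_eq_single j]
    · simp [hek]
    · intro k _ hk; simp [hek, hk]
    · simp
  have hsub : ∀ (c z : Fin n → ℝ),
      ∑ k, c k * (z - e) k = (∑ k, c k * z k) - c j := by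
    intro c z
    have : ∀ k, c k * (z - e) k = c k * z k - c k * e k := by
      intro k; simp [mul_sub]
    rw [Finset.sum_congr rfl fun k _ => this k, Finset.sum_sub_distrib, hsingle]
  have hadd : ∀ (c z : Fin n → ℝ),
      ∑ k, c k * (z + e) k = (∑ k, c k * z k) + c j := by
    intro c z
    have : ∀ k, c k * (z + e) k = c k * z k + c k * e k := by
      intro k; simp [mul_add]
    rw [Finset.sum_congr rfl fun k _ => this k, Finset.sum_add_distrib, hsingle]
  have hopt' : IsLPOptimal r A (fun i => b i - A i j) (Z - e) (y - e) := by
    refine ⟨⟨fun i => ?_, fun k => ?_, fun k => ?_⟩, fun z hz1 hz2 hz3 => ?_⟩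
    · show _ ≤ b i - A i j
      rw [hsub]; linarith [h1 i]
    · simp only [Pi.sub_apply, hek]
      by_cases hk : k = j
      · subst hk; simp; linarith
      · simp [hk]; exact h2 k
    · simp only [Pi.sub_apply]
      exact sub_le_sub (h3 k) le_rfl
    · have key : ∑ k, r k * (z + e) k ≤ ∑ k, r k * y k := by
        apply hmax
        · intro i
          rw [hadd]
          have := hz1 i
          simp only at this
          linarith
        · intro k
          simp only [Pi.add_apply, hek]
          by_cases hk : k = j
          · subst hk; simp; linarith [hz2 k]
          · simp [hk]; exact hz2 k
        · intro k
          have := hz3 k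
          simp only [Pi.sub_apply] at this
          simp only [Pi.add_apply]
          linarith
      rw [hadd] at key
      rw [hsub]; linarith
  refine ⟨hopt', ?_⟩
  rw [lpValue_eq_of_optimal r A b Z y ⟨⟨h1, h2, h3⟩, hmax⟩,
    lpValue_eq_of_optimal _ _ _ _ _ hopt', hsub]
  ring
end

section
/- Fix real numbers T ≥ 3, 1/2 < β < 1, and a nonnegative integer n. If T_{k−1} ≥ ⌈T − T^{β^n}⌉ and t ≤ T_k ≤ ⌈T − T^{β^{n+1}}⌉, then T − T_{k−1} ≤ (T − t + 1)^{1/β}. (In particular, (T − ⌈T − T^{β^{n+1}}⌉ + 1)^{1/β} ≥ T^{β^n}.) -/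
/-- Approximation half of the resolving-schedule lemma: if `T_{k−1} ≥ ⌈T − T^(β^n)⌉` and
`t ≤ T_k ≤ ⌈T − T^(β^(n+1))⌉`, then `T − T_{k−1} ≤ (T − t + 1)^(1/β)`; in particular,
`(T − ⌈T − T^(β^(n+1))⌉ + 1)^(1/β) ≥ T^(β^n)`. -/
theorem approximation_schedule_bound (T β : ℝ) (n : ℕ) (hT : 3 ≤ T)
    (hβ0 : 1 / 2 < β) (hβ1 : β < 1) (Tk1 Tk t : ℝ)
    (h1 : (⌈T - T ^ (β ^ n)⌉ : ℝ) ≤ Tk1)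
    (h2 : t ≤ Tk) (h3 : Tk ≤ (⌈T - T ^ (β ^ (n + 1))⌉ : ℝ)) :
    T - Tk1 ≤ (T - t + 1) ^ (1 / β) ∧
      T ^ (β ^ n) ≤ (T - (⌈T - T ^ (β ^ (n + 1))⌉ : ℝ) + 1) ^ (1 / β) := by
  have hT0 : (0:ℝ) < T := by linarith
  have hb : (0:ℝ) < β := by linarith
  have hpos : (0:ℝ) < T ^ (β ^ (n + 1)) := Real.rpow_pos_of_pos hT0 _
  have hc2 : ((⌈T - T ^ (β ^ (n + 1))⌉ : ℤ) : ℝ) < (T - T ^ (β ^ (n + 1))) + 1 :=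
    Int.ceil_lt_add_one _
  have hc3 : T - T ^ (β ^ n) ≤ (⌈T - T ^ (β ^ n)⌉ : ℝ) := Int.le_ceil _
  have ha : T ^ (β ^ (n + 1)) ≤ T - (⌈T - T ^ (β ^ (n + 1))⌉ : ℝ) + 1 := by linarith
  have hkey : (T ^ (β ^ (n + 1))) ^ (1 / β) = T ^ (β ^ n) := by
    rw [← Real.rpow_mul hT0.le]
    congr 1
    field_simp
    ring
  have h2nd : T ^ (β ^ n) ≤ (T - (⌈T - T ^ (β ^ (n + 1))⌉ : ℝ) + 1) ^ (1 / β) := by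
    calc T ^ (β ^ n) = (T ^ (β ^ (n + 1))) ^ (1 / β) := hkey.symm
      _ ≤ (T - (⌈T - T ^ (β ^ (n + 1))⌉ : ℝ) + 1) ^ (1 / β) :=
        Real.rpow_le_rpow hpos.le ha (by positivity)
  refine ⟨?_, h2nd⟩
  calc T - Tk1 ≤ T ^ (β ^ n) := by linarith
    _ ≤ (T - (⌈T - T ^ (β ^ (n + 1))⌉ : ℝ) + 1) ^ (1 / β) := h2nd
    _ ≤ (T - t + 1) ^ (1 / β) :=
      Real.rpow_le_rpow (by linarith) (by linarith) (by positivity)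
end

section
/- Let φ(b, d) = max { rᵀy : A y ≤ b, 0 ≤ y ≤ d } with r ≥ 0, A ≥ 0 entrywise. Suppose u is an optimal solution of φ(b, d), d_j ≥ 2, and u_j ≥ d_j/2 (so u_j ≥ 1). Then u − e_j is an optimal solution of φ(b − A_j, d − e_j). -/
open BigOperators

/-- Acceptance case of the surrogate-LP induction step: if `u` is optimal for `φ(b, d)`,
`d_j ≥ 2` and `u_j ≥ d_j/2`, then `u − e_j` is optimal for `φ(b − A_j, d − e_j)`. -/
theorem surrogate_accept_step {m n : ℕ} (r : Fin n → ℝ) (A : Matrix (Fin m) (Fin n) ℝ)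
    (b : Fin m → ℝ) (d : Fin n → ℝ) (j : Fin n) (u : Fin n → ℝ)
    (hr : ∀ k, 0 ≤ r k) (hA : ∀ i k, 0 ≤ A i k)
    (hopt : IsLPOptimal r A b d u) (hdj : 2 ≤ d j) (huj : d j / 2 ≤ u j) :
    IsLPOptimal r A (fun i => b i - A i j) (d - Pi.single j 1) (u - Pi.single j 1) := by
  classical
  obtain ⟨⟨hfeas, hpos, hle⟩, hopt⟩ := hopt
  have huj1 : (1 : ℝ) ≤ u j := le_trans (by linarith) huj
  have hsingle : ∀ (c : Fin n → ℝ), ∑ k, c k * (Pi.single j 1 : Fin n → ℝ) k = c j := by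
    intro c
    simp [Pi.single_apply, mul_ite, Finset.sum_ite_eq']
  have hsum : ∀ (c v : Fin n → ℝ),
      ∑ k, c k * (v k - (Pi.single j 1 : Fin n → ℝ) k) = (∑ k, c k * v k) - c j := by
    intro c v
    rw [show (∑ k, c k * (v k - (Pi.single j 1 : Fin n → ℝ) k))
        = ∑ k, (c k * v k - c k * (Pi.single j 1 : Fin n → ℝ) k) from
      Finset.sum_congr rfl (fun k _ => by ring), Finset.sum_sub_distrib, hsingle]
  have hsum' : ∀ (c v : Fin n → ℝ),
      ∑ k, c k * (v k + (Pi.single j 1 : Fin n → ℝ) k) = (∑ k, c k * v k) + c j := by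
    intro c v
    rw [show (∑ k, c k * (v k + (Pi.single j 1 : Fin n → ℝ) k))
        = ∑ k, (c k * v k + c k * (Pi.single j 1 : Fin n → ℝ) k) from
      Finset.sum_congr rfl (fun k _ => by ring), Finset.sum_add_distrib, hsingle]
  refine ⟨⟨?_, ?_, ?_⟩, ?_⟩
  · intro i
    have h1 := hfeas i
    have h2 := hsum (A i) u
    simp only [Pi.sub_apply]
    rw [h2]
    linarith
  · intro k
    simp only [Pi.sub_apply, Pi.single_apply]
    rcases eq_or_ne k j with hk | hk
    · subst hk; simp; linarith
    · simp [hk]; exact hpos k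
  · intro k
    simp only [Pi.sub_apply, Pi.single_apply]
    rcases eq_or_ne k j with hk | hk
    · subst hk; simp; exact hle _
    · simp [hk]; exact hle k
  · intro z hzf hz0 hzd
    have hwf : ∀ i, ∑ k, A i k * (z k + (Pi.single j 1 : Fin n → ℝ) k) ≤ b i := by
      intro i
      rw [hsum' (A i) z]
      have := hzf i
      simp only at this
      linarith
    have hw0 : ∀ k, 0 ≤ z k + (Pi.single j 1 : Fin n → ℝ) k := by
      intro k
      have h0 := hz0 k
      simp only [Pi.single_apply]
      rcases eq_or_ne k j with hk | hk
      · subst hk; simp; linarith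
      · simp [hk]; exact h0
    have hwd : ∀ k, z k + (Pi.single j 1 : Fin n → ℝ) k ≤ d k := by
      intro k
      have hd := hzd k
      simp only [Pi.sub_apply, Pi.single_apply] at hd ⊢
      rcases eq_or_ne k j with hk | hk
      · subst hk; simp at hd ⊢; linarith
      · simp [hk] at hd ⊢; linarith
    have hle2 := hopt _ hwf hw0 hwd
    rw [hsum' r z] at hle2
    simp only [Pi.sub_apply]
    rw [hsum r u]
    linarith
end
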